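/- A future-directed causal curve in Minkowski space-time of finite parameter length acquires a future endpoint: if b < ∞ and c : [a,b) → 𝕄 is a future-directed causal curve parametrized by Euclidean arc length, then the limit y = lim_{s→b⁻} c(s) exists in 𝕄, and the extension of c to [a,b] by c(b) = y is again a future-directed causal curve (in particular c(s) ≤ y and c(s) ≠ y for all s < b). Consequently, a future-directed causal curve parametrized by arc length is future-endless if and only if its parameter domain is unbounded above. -/

import Mathlib

noncomputable section

open Set Filter

/-- Minkowski space-time `𝕄 = ℝ × EuclideanSpace ℝ (Fin 3)`, equipped with the Euclidean
norm `‖(t,x)‖ = √(t² + ‖x‖²)` (i.e. the `L²` product norm). -/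
abbrev Mink : Type := WithLp 2 (ℝ × EuclideanSpace ℝ (Fin 3))

/-- The future causal cone `C = {(t,x) : ‖x‖ ≤ t}`. -/
def causalCone : Set Mink := {p | ‖p.ofLp.2‖ ≤ p.ofLp.1}

/-- The future chronological cone `C° = {(t,x) : ‖x‖ < t}` (the interior of `C`). -/
def chronCone : Set Mink := {p | ‖p.ofLp.2‖ < p.ofLp.1}

/-- `causalLE x y` (written `x ≤ y`): `x` causally precedes `y`, i.e. `y - x ∈ C`. -/
def causalLE (x y : Mink) : Prop := y - x ∈ causalCone

/-- `chronLT x y` (written `x ≪ y`): `x` chronologically precedes `y`, i.e. `y - x ∈ C°`. -/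
def chronLT (x y : Mink) : Prop := y - x ∈ chronCone

/-- The chronological past `I⁻(x) = {z : z ≪ x}`. -/
def Iminus (x : Mink) : Set Mink := {z | chronLT z x}

/-- The causal past `J⁻(x) = {z : z ≤ x}`. -/
def Jminus (x : Mink) : Set Mink := {z | causalLE z x}

/-- The causal future `J⁺(x) = {z : x ≤ z}`. -/
def Jplus (x : Mink) : Set Mink := {z | causalLE x z}

/-- A future-directed causal curve on an interval `I ⊆ ℝ`: a continuous map `c : I → 𝕄`
such that `c t - c s ∈ C` and `c s ≠ c t` whenever `s < t` in `I`. -/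
def IsFDCausalOn (c : ℝ → Mink) (I : Set ℝ) : Prop :=
  ContinuousOn c I ∧ ∀ s ∈ I, ∀ t ∈ I, s < t → c t - c s ∈ causalCone ∧ c s ≠ c t

/-! Arc-length parametrization makes `c` 1-Lipschitz, hence uniformly continuous on `[a, b)`,
so it has a left limit `y` at `b` in the complete space `𝕄`. Closedness of the cone gives
`c s ≤ y`, and `c s = y` would give `c s ≤ c t ≤ c s` for some `s < t < b`, contradicting the
antisymmetry of `≤`.

A causal vector `(t, x)` has Euclidean norm at most `√2 t`, so the arc length of a causal curve is
at most `√2` times the elapsed time. On `[a', ∞)` the arc length is unbounded, hence so is the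
time coordinate, and the curve cannot converge. -/

open Topology ENNReal

lemma eVariationOn_le_mul_of_edist_le {α E F : Type*} [LinearOrder α] [PseudoEMetricSpace E]
    [PseudoEMetricSpace F] {f : α → E} {g : α → F} {s : Set α} {C : ℝ≥0∞}
    (h : ∀ x ∈ s, ∀ y ∈ s, edist (f x) (f y) ≤ C * edist (g x) (g y)) :
    eVariationOn f s ≤ C * eVariationOn g s := by
  refine iSup_le fun ⟨n, u, hu, us⟩ => ?_
  calc ∑ i ∈ Finset.range n, edist (f (u (i + 1))) (f (u i))
      ≤ ∑ i ∈ Finset.range n, C * edist (g (u (i + 1))) (g (u i)) :=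
        Finset.sum_le_sum fun i _ => h _ (us _) _ (us _)
    _ = C * ∑ i ∈ Finset.range n, edist (g (u (i + 1))) (g (u i)) := by rw [Finset.mul_sum]
    _ ≤ C * eVariationOn g s := by grw [eVariationOn.sum_le hu us]

section ArcLength

variable {E : Type*} [PseudoEMetricSpace E] {f : ℝ → E} {a b : ℝ}

lemma eVariationOn_Icc_eq_of_arcLength
    (h : ∀ s ∈ Ico a b, eVariationOn f (Icc a s) = ENNReal.ofReal (s - a)) {s t : ℝ}
    (hs : s ∈ Ico a b) (ht : t ∈ Ico a b) (hst : s ≤ t) :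
    eVariationOn f (Icc s t) = ENNReal.ofReal (t - s) := by
  have hadd := eVariationOn.Icc_add_Icc f (s := univ) hs.1 hst (mem_univ s)
  rw [univ_inter, univ_inter, univ_inter, h s hs, h t ht,
    show t - a = (s - a) + (t - s) by ring, ENNReal.ofReal_add (by linarith [hs.1]) (by linarith)]
    at hadd
  exact (ENNReal.add_right_inj ofReal_ne_top).1 hadd

lemma lipschitzOnWith_one_of_arcLength
    (h : ∀ s ∈ Ico a b, eVariationOn f (Icc a s) = ENNReal.ofReal (s - a)) :
    LipschitzOnWith 1 f (Ico a b) := by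
  intro s hs t ht
  wlog hst : s ≤ t generalizing s t
  · rw [edist_comm, edist_comm s]
    exact this ht hs (le_of_not_ge hst)
  rw [ENNReal.coe_one, one_mul, edist_dist s, Real.dist_eq, abs_sub_comm,
    abs_of_nonneg (sub_nonneg.2 hst), ← eVariationOn_Icc_eq_of_arcLength h hs ht hst]
  exact eVariationOn.edist_le f ⟨le_rfl, hst⟩ ⟨hst, le_rfl⟩

end ArcLength

lemma UniformContinuousOn.exists_tendsto_nhdsLT {E : Type*} [UniformSpace E] [CompleteSpace E]
    {f : ℝ → E} {a b : ℝ} (hab : a < b) (hf : UniformContinuousOn f (Ico a b)) :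
    ∃ y, Tendsto f (𝓝[<] b) (𝓝 y) := by
  have hle : 𝓝[<] b ≤ 𝓟 (Ico a b) := by
    rw [← nhdsWithin_Ico_eq_nhdsLT hab]
    exact inf_le_right
  exact cauchy_map_iff_exists_tendsto.1 ((cauchy_nhds.mono nhdsWithin_le_nhds).map_of_le hf hle)

lemma continuousOn_update_Icc_of_tendsto {E : Type*} [TopologicalSpace E] {f : ℝ → E} {a b : ℝ}
    {y : E} (hf : ContinuousOn f (Ico a b)) (hy : Tendsto f (𝓝[<] b) (𝓝 y)) :
    ContinuousOn (Function.update f b y) (Icc a b) := by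
  rw [continuousOn_update_iff, Icc_sdiff_right]
  exact ⟨hf, fun _ => hy.mono_left (nhdsWithin_mono _ Ico_subset_Iio_self)⟩

lemma isClosed_causalCone : IsClosed causalCone :=
  isClosed_le (continuous_snd.comp (WithLp.prod_continuous_ofLp ..)).norm
    (continuous_fst.comp (WithLp.prod_continuous_ofLp ..))

lemma fst_nonneg_of_mem_causalCone {p : Mink} (hp : p ∈ causalCone) : 0 ≤ p.ofLp.1 :=
  (norm_nonneg _).trans hp

lemma eq_zero_of_mem_causalCone_of_neg_mem {p : Mink} (hp : p ∈ causalCone)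
    (hp' : -p ∈ causalCone) : p = 0 := by
  have hpos : ‖p.ofLp.2‖ ≤ p.ofLp.1 := hp
  have hneg : ‖p.ofLp.2‖ ≤ -p.ofLp.1 := by simpa [causalCone] using hp'
  have hsnd : ‖p.ofLp.2‖ = 0 := by linarith [norm_nonneg p.ofLp.2]
  have hfst : p.ofLp.1 = 0 := by linarith
  exact WithLp.ofLp_injective 2 (Prod.ext hfst (norm_eq_zero.1 hsnd))

lemma causalLE_antisymm {p q : Mink} (hpq : causalLE p q) (hqp : causalLE q p) : p = q :=
  (sub_eq_zero.1 (eq_zero_of_mem_causalCone_of_neg_mem hpq (by rwa [neg_sub]))).symm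

lemma norm_le_sqrt_two_mul_fst_of_mem_causalCone {p : Mink} (hp : p ∈ causalCone) :
    ‖p‖ ≤ √2 * p.ofLp.1 := by
  have h0 := fst_nonneg_of_mem_causalCone hp
  have hsq : ‖p.ofLp.2‖ ^ 2 ≤ p.ofLp.1 ^ 2 := pow_le_pow_left₀ (norm_nonneg _) hp 2
  calc ‖p‖ = √(p.ofLp.1 ^ 2 + ‖p.ofLp.2‖ ^ 2) := by
        rw [WithLp.prod_norm_eq_of_L2, Real.norm_eq_abs, sq_abs]; rfl
    _ ≤ √(2 * p.ofLp.1 ^ 2) := Real.sqrt_le_sqrt (by linarith)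
    _ = √2 * p.ofLp.1 := by rw [Real.sqrt_mul zero_le_two, Real.sqrt_sq h0]

def IsCausalOn (c : ℝ → Mink) (I : Set ℝ) : Prop :=
  ∀ s ∈ I, ∀ t ∈ I, s < t → causalLE (c s) (c t)

lemma IsFDCausalOn.isCausalOn {c : ℝ → Mink} {I : Set ℝ} (hc : IsFDCausalOn c I) :
    IsCausalOn c I :=
  fun s hs t ht hst => (hc.2 s hs t ht hst).1

namespace IsCausalOn

variable {c : ℝ → Mink} {I : Set ℝ} {a b : ℝ}

lemma monotoneOn_fst (hc : IsCausalOn c I) : MonotoneOn (fun s => (c s).ofLp.1) I := by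
  intro s hs t ht hst
  rcases hst.eq_or_lt with rfl | hlt
  · exact le_rfl
  · simpa using fst_nonneg_of_mem_causalCone (hc s hs t ht hlt)

lemma edist_le_sqrt_two_mul_edist_fst (hc : IsCausalOn c I) {s t : ℝ} (hs : s ∈ I)
    (ht : t ∈ I) :
    edist (c s) (c t) ≤ ENNReal.ofReal √2 * edist (c s).ofLp.1 (c t).ofLp.1 := by
  wlog hst : s ≤ t generalizing s t
  · rw [edist_comm, edist_comm (c s).ofLp.1]
    exact this ht hs (le_of_not_ge hst)
  rcases hst.eq_or_lt with rfl | hlt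
  · simp
  have hcone : c t - c s ∈ causalCone := hc s hs t ht hlt
  rw [edist_dist, edist_dist, ← ENNReal.ofReal_mul (Real.sqrt_nonneg 2), dist_comm,
    dist_eq_norm, Real.dist_eq, abs_sub_comm,
    abs_of_nonneg (by simpa using fst_nonneg_of_mem_causalCone hcone)]
  exact ENNReal.ofReal_le_ofReal (by simpa using norm_le_sqrt_two_mul_fst_of_mem_causalCone hcone)

lemma eVariationOn_Icc_le (hc : IsCausalOn c I) {s t : ℝ} (hst : Icc s t ⊆ I) (hs : s ∈ I)
    (ht : t ∈ I) :
    eVariationOn c (Icc s t) ≤ ENNReal.ofReal (√2 * ((c t).ofLp.1 - (c s).ofLp.1)) := by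
  calc eVariationOn c (Icc s t)
      ≤ ENNReal.ofReal √2 * eVariationOn (fun r => (c r).ofLp.1) (Icc s t) :=
        eVariationOn_le_mul_of_edist_le fun x hx y hy =>
          hc.edist_le_sqrt_two_mul_edist_fst (hst hx) (hst hy)
    _ = ENNReal.ofReal (√2 * ((c t).ofLp.1 - (c s).ofLp.1)) := by
        rw [← inter_eq_right.2 hst, hc.monotoneOn_fst.eVariationOn_eq hs ht,
          ← ENNReal.ofReal_mul (Real.sqrt_nonneg 2)]


lemma causalLE_of_tendsto (hc : IsCausalOn c (Ico a b)) {y : Mink}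
    (hy : Tendsto c (𝓝[<] b) (𝓝 y)) {s : ℝ} (hs : s ∈ Ico a b) : causalLE (c s) y := by
  refine isClosed_causalCone.mem_of_tendsto (hy.sub tendsto_const_nhds) ?_
  filter_upwards [Ioo_mem_nhdsLT hs.2] with t ht
  exact hc s hs t ⟨hs.1.trans ht.1.le, ht.2⟩ ht.1

lemma sub_le_sqrt_two_mul_fst_sub (hc : IsCausalOn c (Ici a))
    (harc : ∀ s, a ≤ s → eVariationOn c (Icc a s) = ENNReal.ofReal (s - a)) {s : ℝ}
    (hs : a ≤ s) : s - a ≤ √2 * ((c s).ofLp.1 - (c a).ofLp.1) := by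
  have h := hc.eVariationOn_Icc_le Icc_subset_Ici_self self_mem_Ici hs
  rw [harc s hs] at h
  have htime : (c a).ofLp.1 ≤ (c s).ofLp.1 := hc.monotoneOn_fst self_mem_Ici hs hs
  exact (ENNReal.ofReal_le_ofReal_iff (by positivity)).1 h

lemma tendsto_fst_atTop (hc : IsCausalOn c (Ici a))
    (harc : ∀ s, a ≤ s → eVariationOn c (Icc a s) = ENNReal.ofReal (s - a)) :
    Tendsto (fun s => (c s).ofLp.1) atTop atTop := by
  have hlin : Tendsto (fun s => (c a).ofLp.1 + (s - a) / √2) atTop atTop :=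
    tendsto_atTop_add_const_left _ _
      ((tendsto_atTop_add_const_right _ (-a) tendsto_id).atTop_div_const (by positivity))
  refine tendsto_atTop_mono' _ ?_ hlin
  filter_upwards [eventually_ge_atTop a] with s hs
  have h := hc.sub_le_sqrt_two_mul_fst_sub harc hs
  rwa [← le_sub_iff_add_le', div_le_iff₀ (by positivity), mul_comm]

end IsCausalOn

namespace IsFDCausalOn

variable {c : ℝ → Mink} {a b : ℝ} {y : Mink}

lemma ne_of_tendsto (hc : IsFDCausalOn c (Ico a b)) (hy : Tendsto c (𝓝[<] b) (𝓝 y)) {s : ℝ}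
    (hs : s ∈ Ico a b) : c s ≠ y := by
  rintro rfl
  obtain ⟨t, hst, htb⟩ := exists_between hs.2
  have ht : t ∈ Ico a b := ⟨hs.1.trans hst.le, htb⟩
  obtain ⟨hle, hne⟩ := hc.2 s hs t ht hst
  exact hne (causalLE_antisymm hle (hc.isCausalOn.causalLE_of_tendsto hy ht))

lemma update_Icc (hc : IsFDCausalOn c (Ico a b)) (hy : Tendsto c (𝓝[<] b) (𝓝 y)) :
    IsFDCausalOn (Function.update c b y) (Icc a b) := by
  refine ⟨continuousOn_update_Icc_of_tendsto hc.1 hy, fun s hs t ht hst => ?_⟩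
  have hsb : s < b := hst.trans_le ht.2
  rw [Function.update_of_ne hsb.ne]
  rcases ht.2.eq_or_lt with rfl | htb
  · rw [Function.update_self]
    exact ⟨hc.isCausalOn.causalLE_of_tendsto hy ⟨hs.1, hsb⟩, hc.ne_of_tendsto hy ⟨hs.1, hsb⟩⟩
  · rw [Function.update_of_ne htb.ne]
    exact hc.2 s ⟨hs.1, hsb⟩ t ⟨ht.1, htb⟩ hst

end IsFDCausalOn

/-- A future-directed causal curve of finite parameter length acquires a future endpoint:
if `c : [a,b) → 𝕄` (with `b < ∞`) is future-directed causal and parametrized by Euclidean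
arc length, then `y = lim_{s→b⁻} c s` exists, the extension of `c` to `[a,b]` by `c b = y`
is again a future-directed causal curve (in particular `c s ≤ y` and `c s ≠ y` for `s < b`).
Consequently (second conjunct) a future-directed causal curve parametrized by arc length on
a domain unbounded above has no future endpoint, so such a curve is future-endless iff its
parameter domain is unbounded above. -/
theorem minkowski_finite_length_causal_curve_has_endpoint (a b : ℝ) (hab : a < b)
    (c : ℝ → Mink) (hc : IsFDCausalOn c (Set.Ico a b))
    (harc : ∀ s ∈ Set.Ico a b, eVariationOn c (Set.Icc a s) = ENNReal.ofReal (s - a)) :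
    (∃ y : Mink,
      Filter.Tendsto c (nhdsWithin b (Set.Iio b)) (nhds y) ∧
      (∀ s ∈ Set.Ico a b, causalLE (c s) y ∧ c s ≠ y) ∧
      IsFDCausalOn (Function.update c b y) (Set.Icc a b)) ∧
    (∀ (a' : ℝ) (c' : ℝ → Mink), IsFDCausalOn c' (Set.Ici a') →
      (∀ s : ℝ, a' ≤ s → eVariationOn c' (Set.Icc a' s) = ENNReal.ofReal (s - a')) →
      ¬ ∃ y : Mink, Filter.Tendsto c' Filter.atTop (nhds y)) := by
  refine ⟨?_, fun a' c' hc' harc' ⟨y, hy⟩ => ?_⟩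
  · obtain ⟨y, hy⟩ :=
      (lipschitzOnWith_one_of_arcLength harc).uniformContinuousOn.exists_tendsto_nhdsLT hab
    exact ⟨y, hy, fun s hs => ⟨hc.isCausalOn.causalLE_of_tendsto hy hs, hc.ne_of_tendsto hy hs⟩,
      hc.update_Icc hy⟩
  · have hfst : Tendsto (fun s => (c' s).ofLp.1) atTop (𝓝 y.ofLp.1) :=
      ((continuous_fst.comp (WithLp.prod_continuous_ofLp ..)).tendsto y).comp hy
    exact not_tendsto_atTop_of_tendsto_nhds hfst (hc'.isCausalOn.tendsto_fst_atTop harc')
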